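/- arXiv:2602.01573 — 3 statements merged into one kernel-verified Lean document; each statement's English description precedes it below -/
import Mathlib

section
/- Let Θ be a measurable space with probability measure π, let X be a measurable space equipped with a σ-finite measure μ, let η > 0, and let ℓ : Θ × X → ℝ be jointly measurable with Z_ℓ(x) = ∫_Θ exp(−η ℓ(θ,x)) π(dθ) ∈ (0,∞) for every x. Define A(θ) = ∫_X exp(−η ℓ(θ,x)) μ(dx). If there is a constant A ∈ (0,∞) with A(θ) = A for every θ, then p(θ,x) = exp(−η ℓ(θ,x))/A satisfies ∫_X p(θ,x) μ(dx) = 1 for every θ (i.e., p(θ,·) is a probability density with respect to μ), and for every x the Bayesian posterior with π-density θ ↦ p(θ,x)/∫_Θ p(ϑ,x) π(dϑ) equals the Gibbs posterior with π-density θ ↦ exp(−η ℓ(θ,x))/Z_ℓ(x). -/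
open MeasureTheory

/-- **Corollary 1 (x-normalization diagnostic for Bayesianity), converse part.**
If the partition function `A(θ) = ∫_X exp(−η ℓ(θ,x)) μ(dx)` is a finite positive constant
`A` independent of `θ`, then `p(θ,x) = exp(−η ℓ(θ,x))/A` is a probability density in `x`
with respect to `μ` for every `θ`, and for every `x` the Bayesian posterior with
`π`-density `θ ↦ p(θ,x)/∫ p(ϑ,x) π(dϑ)` equals the Gibbs posterior with `π`-density
`θ ↦ exp(−η ℓ(θ,x))/Z_ℓ(x)`. -/
theorem x_normalization_diagnostic
    {Θ X : Type*} [MeasurableSpace Θ] [MeasurableSpace X]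
    (π : Measure Θ) [IsProbabilityMeasure π]
    (μ : Measure X) [SigmaFinite μ]
    (η : ℝ) (hη : 0 < η)
    (ℓ : Θ → X → ℝ) (hℓ : Measurable fun p : Θ × X => ℓ p.1 p.2)
    (hZint : ∀ x, Integrable (fun θ => Real.exp (-η * ℓ θ x)) π)
    (hZpos : ∀ x, 0 < ∫ θ, Real.exp (-η * ℓ θ x) ∂π)
    (A : ℝ) (hApos : 0 < A)
    (hA : ∀ θ, ∫⁻ x, ENNReal.ofReal (Real.exp (-η * ℓ θ x)) ∂μ = ENNReal.ofReal A) :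
    (∀ θ, ∫⁻ x, ENNReal.ofReal (Real.exp (-η * ℓ θ x) / A) ∂μ = 1) ∧
    (∀ x,
      π.withDensity
          (fun θ =>
            ENNReal.ofReal
              ((Real.exp (-η * ℓ θ x) / A) / ∫ ϑ, Real.exp (-η * ℓ ϑ x) / A ∂π))
        = π.withDensity
            (fun θ =>
              ENNReal.ofReal (Real.exp (-η * ℓ θ x) / ∫ ϑ, Real.exp (-η * ℓ ϑ x) ∂π))) := by
  constructor
  · intro θ
    have h1 : ∀ x, ENNReal.ofReal (Real.exp (-η * ℓ θ x) / A)
        = ENNReal.ofReal (Real.exp (-η * ℓ θ x)) * (ENNReal.ofReal A)⁻¹ := by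
      intro x
      rw [ENNReal.ofReal_div_of_pos hApos, div_eq_mul_inv]
    simp only [h1]
    rw [lintegral_mul_const' _ _ (by simpa using hApos), hA θ, ENNReal.mul_inv_cancel]
    · exact (ENNReal.ofReal_pos.mpr hApos).ne'
    · exact ENNReal.ofReal_ne_top
  · intro x
    congr 1
    funext θ
    congr 1
    rw [integral_div]
    have hZ : (∫ ϑ, Real.exp (-η * ℓ ϑ x) ∂π) ≠ 0 := (hZpos x).ne'
    field_simp
end

section
/- Let Θ₁ and Θ₂ be measurable spaces with probability measures π₁ and π₂. Let D be a real-valued nonnegative functional on probability measures on the product space Θ₁ × Θ₂, and let D₁, D₂ be real-valued nonnegative functionals on probability measures on Θ₁ and Θ₂ respectively. Assume: (a) for all probability measures q₁, r₁ on Θ₁ and q₂, q₂' on Θ₂, D(q₁ ⊗ q₂) − D(r₁ ⊗ q₂) = D(q₁ ⊗ q₂') − D(r₁ ⊗ q₂'); (b) D(q₁ ⊗ π₂) = D₁(q₁) for every probability measure q₁ on Θ₁ and D(π₁ ⊗ q₂) = D₂(q₂) for every probability measure q₂ on Θ₂; (c) D(π₁ ⊗ π₂) = 0. Then for all probability measures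 q₁ on Θ₁ and q₂ on Θ₂, D(q₁ ⊗ q₂) = D₁(q₁) + D₂(q₂). -/
open MeasureTheory

/-- **Proposition 1 (separability implies product additivity).**
If the incremental deviation cost in the first component does not depend on the rule
chosen in the second component (and symmetrically via the marginal identifications),
and the cost of the baseline is zero, then the deviation cost is additive over
product rules: `D(q₁ ⊗ q₂) = D₁(q₁) + D₂(q₂)`. -/
theorem separability_implies_product_additivity
    {Θ₁ Θ₂ : Type*} [MeasurableSpace Θ₁] [MeasurableSpace Θ₂]
    (π₁ : Measure Θ₁) (π₂ : Measure Θ₂)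
    [IsProbabilityMeasure π₁] [IsProbabilityMeasure π₂]
    (D : Measure (Θ₁ × Θ₂) → ℝ) (D₁ : Measure Θ₁ → ℝ) (D₂ : Measure Θ₂ → ℝ)
    (hDnonneg : ∀ q : Measure (Θ₁ × Θ₂), IsProbabilityMeasure q → 0 ≤ D q)
    (hD₁nonneg : ∀ q₁ : Measure Θ₁, IsProbabilityMeasure q₁ → 0 ≤ D₁ q₁)
    (hD₂nonneg : ∀ q₂ : Measure Θ₂, IsProbabilityMeasure q₂ → 0 ≤ D₂ q₂)
    (ha : ∀ (q₁ r₁ : Measure Θ₁) (q₂ q₂' : Measure Θ₂),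
        IsProbabilityMeasure q₁ → IsProbabilityMeasure r₁ →
        IsProbabilityMeasure q₂ → IsProbabilityMeasure q₂' →
        D (q₁.prod q₂) - D (r₁.prod q₂) = D (q₁.prod q₂') - D (r₁.prod q₂'))
    (hb₁ : ∀ q₁ : Measure Θ₁, IsProbabilityMeasure q₁ → D (q₁.prod π₂) = D₁ q₁)
    (hb₂ : ∀ q₂ : Measure Θ₂, IsProbabilityMeasure q₂ → D (π₁.prod q₂) = D₂ q₂)
    (hc : D (π₁.prod π₂) = 0) :
    ∀ (q₁ : Measure Θ₁) (q₂ : Measure Θ₂),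
      IsProbabilityMeasure q₁ → IsProbabilityMeasure q₂ →
      D (q₁.prod q₂) = D₁ q₁ + D₂ q₂ := by
  intro q₁ q₂ h₁ h₂
  have key := ha q₁ π₁ q₂ π₂ h₁ inferInstance h₂ inferInstance
  rw [hb₂ q₂ h₂, hb₁ q₁ h₁, hc] at key
  linarith
end

section
/- Let X be a measurable space, and for j ∈ {0,1} let Θ_j be a measurable space with probability measure π_j, η > 0 a common rate, and ℓ_j : Θ_j × X → ℝ measurable losses with normalizing constants Z_j(x) = ∫ exp(−η ℓ_j(θ,x)) π_j(dθ) ∈ (0,∞) for all x, Gibbs posteriors q_j(·|x), and generalized Bayes factor BF₁₀(x) = Z₁(x)/Z₀(x). Then for every measurable function g : X → (0,∞) there exist measurable functions c₀, c₁ : X → ℝ such that the shifted losses ℓ_j'(θ,x) = ℓ_j(θ,x) + c_j(x) satisfy: q_j'(·|x) = q_j(·|x) for all x and j ∈ {0,1}, but BF₁₀'(x) = Z₁'(x)/Z₀'(x) = g(x) · BF₁₀(x) for all x. -/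
open MeasureTheory

private lemma shift_integral {Θ : Type*} [MeasurableSpace Θ] (π : Measure Θ)
    (η c : ℝ) (f : Θ → ℝ) :
    ∫ θ, Real.exp (-η * (f θ + c)) ∂π
      = Real.exp (-η * c) * ∫ θ, Real.exp (-η * f θ) ∂π := by
  rw [← MeasureTheory.integral_const_mul]
  congr 1; ext θ; rw [← Real.exp_add]; ring_nf

private lemma shift_density {Θ : Type*} [MeasurableSpace Θ] (π : Measure Θ)
    (η c : ℝ) (f : Θ → ℝ) (θ : Θ) :
    Real.exp (-η * (f θ + c)) / ∫ ϑ, Real.exp (-η * (f ϑ + c)) ∂π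
      = Real.exp (-η * f θ) / ∫ ϑ, Real.exp (-η * f ϑ) ∂π := by
  rw [shift_integral]
  have : Real.exp (-η * (f θ + c)) = Real.exp (-η * c) * Real.exp (-η * f θ) := by
    rw [← Real.exp_add]; ring_nf
  rw [this, mul_div_mul_left _ _ (Real.exp_ne_zero _)]

/-- **Corollary (generalized Bayes factors are not well-defined evidence).**
For any measurable positive factor `g(x)` there exist data-only shifts `c₀, c₁` of the
two losses leaving both Gibbs posteriors unchanged while multiplying the generalized
Bayes factor `Z₁(x)/Z₀(x)` by `g(x)`. -/
theorem generalized_bayes_factors_not_well_defined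
    {Θ₀ Θ₁ X : Type*} [MeasurableSpace Θ₀] [MeasurableSpace Θ₁] [MeasurableSpace X]
    (π₀ : Measure Θ₀) (π₁ : Measure Θ₁)
    [IsProbabilityMeasure π₀] [IsProbabilityMeasure π₁]
    (η : ℝ) (hη : 0 < η)
    (ℓ₀ : Θ₀ → X → ℝ) (ℓ₁ : Θ₁ → X → ℝ)
    (hℓ₀ : ∀ x, Measurable fun θ => ℓ₀ θ x) (hℓ₁ : ∀ x, Measurable fun θ => ℓ₁ θ x)
    (hZ₀int : ∀ x, Integrable (fun θ => Real.exp (-η * ℓ₀ θ x)) π₀)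
    (hZ₁int : ∀ x, Integrable (fun θ => Real.exp (-η * ℓ₁ θ x)) π₁)
    (hZ₀pos : ∀ x, 0 < ∫ θ, Real.exp (-η * ℓ₀ θ x) ∂π₀)
    (hZ₁pos : ∀ x, 0 < ∫ θ, Real.exp (-η * ℓ₁ θ x) ∂π₁) :
    ∀ g : X → ℝ, Measurable g → (∀ x, 0 < g x) →
      ∃ c₀ c₁ : X → ℝ, Measurable c₀ ∧ Measurable c₁ ∧
        -- both shifted posteriors coincide with the originals
        (∀ x,
          π₀.withDensity
              (fun θ =>
                ENNReal.ofReal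
                  (Real.exp (-η * (ℓ₀ θ x + c₀ x))
                    / ∫ ϑ, Real.exp (-η * (ℓ₀ ϑ x + c₀ x)) ∂π₀))
            = π₀.withDensity
                (fun θ =>
                  ENNReal.ofReal
                    (Real.exp (-η * ℓ₀ θ x) / ∫ ϑ, Real.exp (-η * ℓ₀ ϑ x) ∂π₀))) ∧
        (∀ x,
          π₁.withDensity
              (fun θ =>
                ENNReal.ofReal
                  (Real.exp (-η * (ℓ₁ θ x + c₁ x))
                    / ∫ ϑ, Real.exp (-η * (ℓ₁ ϑ x + c₁ x)) ∂π₁))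
            = π₁.withDensity
                (fun θ =>
                  ENNReal.ofReal
                    (Real.exp (-η * ℓ₁ θ x) / ∫ ϑ, Real.exp (-η * ℓ₁ ϑ x) ∂π₁))) ∧
        -- but the generalized Bayes factor is rescaled by `g`
        (∀ x,
          (∫ θ, Real.exp (-η * (ℓ₁ θ x + c₁ x)) ∂π₁)
              / (∫ θ, Real.exp (-η * (ℓ₀ θ x + c₀ x)) ∂π₀)
            = g x *
                ((∫ θ, Real.exp (-η * ℓ₁ θ x) ∂π₁)
                  / (∫ θ, Real.exp (-η * ℓ₀ θ x) ∂π₀))) := by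
  intro g hg hgpos
  refine ⟨fun _ => 0, fun x => -(Real.log (g x)) / η, measurable_const,
    ((hg.log.neg).div_const η), ?_, ?_, ?_⟩
  · intro x; congr 1; ext θ
    exact congrArg ENNReal.ofReal (shift_density π₀ η 0 (fun θ => ℓ₀ θ x) θ)
  · intro x; congr 1; ext θ
    exact congrArg ENNReal.ofReal
      (shift_density π₁ η (-(Real.log (g x)) / η) (fun θ => ℓ₁ θ x) θ)
  · intro x
    have h1 : Real.exp (-η * (-(Real.log (g x)) / η)) = g x := by
      rw [show -η * (-(Real.log (g x)) / η) = Real.log (g x) by field_simp,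
        Real.exp_log (hgpos x)]
    simp only [shift_integral π₁ η, shift_integral π₀ η, h1]
    simp [mul_div_assoc]
end
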